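/- arXiv:1310.6081 — 2 statements merged into one kernel-verified Lean document; each statement's English description precedes it below -/
import Mathlib

section
/- Let Σ be a spacelike codimension-2 submanifold of Schwarzschild spacetime with adapted orthonormal normal frame e_n (spacelike), e_{n+1} (timelike), tangential frame ∂_a, and Q = r dr ∧ dt. Then the components of Q satisfy the algebraic identity Q^{ab} Q_{a,n+1} Q_{bn} = −½ Q^{ab} Q_{ab} Q_{n,n+1}, where tangential indices are raised with the induced metric and Q_{nb} = Q(e_n, ∂_b), Q_{n,n+1} = Q(e_n, e_{n+1}). -/
noncomputable section

private lemma key_identity {n : ℕ} (S : Fin n → Fin n → ℝ) (u v : Fin n → ℝ)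
    (p q p1 q1 : ℝ) :
    (∑ a, ∑ b, ∑ c, ∑ d, S a c * S b d * (u c * v d - u d * v c)
        * (u a * q1 - p1 * v a) * (u b * q - p * v b))
      = -(1 / 2) * (∑ a, ∑ b, ∑ c, ∑ d, S a c * S b d * (u c * v d - u d * v c)
            * (u a * v b - u b * v a)) * (p * q1 - p1 * q) := by
  -- inner contraction over c, d
  have inner : ∀ a b : Fin n,
      (∑ c, ∑ d, S a c * S b d * (u c * v d - u d * v c))
        = (∑ c, S a c * u c) * (∑ d, S b d * v d)
          - (∑ c, S a c * v c) * (∑ d, S b d * u d) := by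
    intro a b
    rw [Finset.sum_mul_sum, Finset.sum_mul_sum, ← Finset.sum_sub_distrib]
    refine Finset.sum_congr rfl fun c _ => ?_
    rw [← Finset.sum_sub_distrib]
    exact Finset.sum_congr rfl fun d _ => by ring
  have lin : ∀ (P : Fin n → ℝ) (s r : ℝ),
      (∑ a, P a * (u a * s - r * v a))
        = s * (∑ a, P a * u a) - r * (∑ a, P a * v a) := by
    intro P s r
    rw [Finset.mul_sum, Finset.mul_sum, ← Finset.sum_sub_distrib]
    exact Finset.sum_congr rfl fun a _ => by ring
  have hL : (∑ a, ∑ b, ∑ c, ∑ d, S a c * S b d * (u c * v d - u d * v c)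
        * (u a * q1 - p1 * v a) * (u b * q - p * v b))
      = (q1 * (∑ a, (∑ c, S a c * u c) * u a) - p1 * (∑ a, (∑ c, S a c * u c) * v a))
          * (q * (∑ b, (∑ d, S b d * v d) * u b) - p * (∑ b, (∑ d, S b d * v d) * v b))
        - (q1 * (∑ a, (∑ c, S a c * v c) * u a) - p1 * (∑ a, (∑ c, S a c * v c) * v a))
          * (q * (∑ b, (∑ d, S b d * u d) * u b) - p * (∑ b, (∑ d, S b d * u d) * v b)) := by
    calc (∑ a, ∑ b, ∑ c, ∑ d, S a c * S b d * (u c * v d - u d * v c)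
            * (u a * q1 - p1 * v a) * (u b * q - p * v b))
        = ∑ a, ∑ b, ((∑ c, S a c * u c) * (∑ d, S b d * v d)
              - (∑ c, S a c * v c) * (∑ d, S b d * u d))
            * (u a * q1 - p1 * v a) * (u b * q - p * v b) := by
          refine Finset.sum_congr rfl fun a _ => Finset.sum_congr rfl fun b _ => ?_
          rw [← inner a b, Finset.sum_mul, Finset.sum_mul]
          refine Finset.sum_congr rfl fun c _ => ?_
          rw [Finset.sum_mul, Finset.sum_mul]
      _ = ∑ a, ∑ b, (((∑ c, S a c * u c) * (u a * q1 - p1 * v a))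
              * ((∑ d, S b d * v d) * (u b * q - p * v b))
            - ((∑ c, S a c * v c) * (u a * q1 - p1 * v a))
              * ((∑ d, S b d * u d) * (u b * q - p * v b))) := by
          exact Finset.sum_congr rfl fun a _ => Finset.sum_congr rfl fun b _ => by ring
      _ = (∑ a, (∑ c, S a c * u c) * (u a * q1 - p1 * v a))
            * (∑ b, (∑ d, S b d * v d) * (u b * q - p * v b))
          - (∑ a, (∑ c, S a c * v c) * (u a * q1 - p1 * v a))
            * (∑ b, (∑ d, S b d * u d) * (u b * q - p * v b)) := by
          rw [Finset.sum_mul_sum, Finset.sum_mul_sum, ← Finset.sum_sub_distrib]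
          refine Finset.sum_congr rfl fun a _ => ?_
          rw [← Finset.sum_sub_distrib]
      _ = _ := by rw [lin, lin, lin, lin]
  have hR : (∑ a, ∑ b, ∑ c, ∑ d, S a c * S b d * (u c * v d - u d * v c)
        * (u a * v b - u b * v a))
      = (∑ a, (∑ c, S a c * u c) * u a) * (∑ b, (∑ d, S b d * v d) * v b)
        - (∑ a, (∑ c, S a c * u c) * v a) * (∑ b, (∑ d, S b d * v d) * u b)
        - (∑ a, (∑ c, S a c * v c) * u a) * (∑ b, (∑ d, S b d * u d) * v b)
        + (∑ a, (∑ c, S a c * v c) * v a) * (∑ b, (∑ d, S b d * u d) * u b) := by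
    calc (∑ a, ∑ b, ∑ c, ∑ d, S a c * S b d * (u c * v d - u d * v c)
            * (u a * v b - u b * v a))
        = ∑ a, ∑ b, ((∑ c, S a c * u c) * (∑ d, S b d * v d)
              - (∑ c, S a c * v c) * (∑ d, S b d * u d))
            * (u a * v b - u b * v a) := by
          refine Finset.sum_congr rfl fun a _ => Finset.sum_congr rfl fun b _ => ?_
          rw [← inner a b, Finset.sum_mul]
          refine Finset.sum_congr rfl fun c _ => ?_
          rw [Finset.sum_mul]
      _ = ∑ a, ∑ b, (((∑ c, S a c * u c) * u a) * ((∑ d, S b d * v d) * v b)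
            - ((∑ c, S a c * u c) * v a) * ((∑ d, S b d * v d) * u b)
            - ((∑ c, S a c * v c) * u a) * ((∑ d, S b d * u d) * v b)
            + ((∑ c, S a c * v c) * v a) * ((∑ d, S b d * u d) * u b)) := by
          exact Finset.sum_congr rfl fun a _ => Finset.sum_congr rfl fun b _ => by ring
      _ = _ := by
          rw [Finset.sum_mul_sum, Finset.sum_mul_sum, Finset.sum_mul_sum,
            Finset.sum_mul_sum, ← Finset.sum_sub_distrib, ← Finset.sum_sub_distrib,
            ← Finset.sum_add_distrib]
          refine Finset.sum_congr rfl fun a _ => ?_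
          rw [← Finset.sum_sub_distrib, ← Finset.sum_sub_distrib, ← Finset.sum_add_distrib]
  rw [hL, hR]
  ring

/-- for a spacelike codimension-2 submanifold of Schwarzschild spacetime
with adapted frame (tangent frame `e_a`, spacelike unit normal `e_n`, timelike unit
normal `e_{n+1}`), the components of the simple (decomposable) 2-form `Q = r dr ∧ dt`
satisfy `Q^{ab} Q_{a,n+1} Q_{bn} = −½ Q^{ab} Q_{ab} Q_{n,n+1}`, tangential indices being
raised with the induced metric `σ_{ab}`.

Here the ambient tangent space at a point is modelled by a real vector space `V` with
(pseudo-Riemannian) bilinear metric `B`; the 2-form `Q = r dr ∧ dt` is decomposable,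
`Q = φ ∧ ψ` with `φ = r dr` and `ψ = dt`. -/
theorem simple_two_form_component_identity
    {V : Type*} [AddCommGroup V] [Module ℝ V]
    (B : V →ₗ[ℝ] V →ₗ[ℝ] ℝ) (hB : ∀ v w, B v w = B w v)
    -- the decomposable 2-form `Q = φ ∧ ψ`
    (φ ψ : V →ₗ[ℝ] ℝ) (Q : V → V → ℝ)
    (hQ : ∀ v w, Q v w = φ v * ψ w - φ w * ψ v)
    -- the adapted frame: tangent frame `e_a` and unit normals `e_n`, `e_{n+1}`
    {d : ℕ} (e : Fin d → V) (en en1 : V)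
    (h_tan_n : ∀ a, B (e a) en = 0) (h_tan_n1 : ∀ a, B (e a) en1 = 0)
    (h_nn : B en en = 1) (h_n1n1 : B en1 en1 = -1) (h_nn1 : B en en1 = 0)
    -- the induced metric `σ_{ab} = B(e_a, e_b)` and its inverse `σ^{ab}`
    (σInv : Fin d → Fin d → ℝ)
    (hσInv : ∀ a b, (∑ c, B (e a) (e c) * σInv c b) = if a = b then (1 : ℝ) else 0) :
    (∑ a, ∑ b, ∑ c, ∑ d', σInv a c * σInv b d' * Q (e c) (e d')
        * Q (e a) en1 * Q (e b) en)
      = -(1 / 2) * (∑ a, ∑ b, ∑ c, ∑ d', σInv a c * σInv b d' * Q (e c) (e d')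
            * Q (e a) (e b)) * Q en en1 := by
  simp only [hQ]
  exact key_identity σInv (fun a => φ (e a)) (fun a => ψ (e a))
    (φ en) (ψ en) (φ en1) (ψ en1)
end
end

section
/- Let γ be a smooth regular curve in ℝ³ with nonvanishing curvature, viewed as a 1-dimensional submanifold. The connection 1-form in mean curvature gauge α_H (defined via e₂ = −H/|H| and the unit binormal) equals the torsion 1-form τ ds of the curve; consequently the time-flat condition div(α_H) = 0 along γ is equivalent to the torsion τ being constant. -/
noncomputable section

/-- The Euclidean dot product on `ℝ³ = Fin 3 → ℝ`. -/
def dot3 (v w : Fin 3 → ℝ) : ℝ := ∑ i, v i * w i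

lemma dot3_contDiff {f g : ℝ → Fin 3 → ℝ} (hf : ContDiff ℝ (↑(⊤:ℕ∞)) f)
    (hg : ContDiff ℝ (↑(⊤:ℕ∞)) g) :
    ContDiff ℝ (↑(⊤:ℕ∞)) (fun s => dot3 (f s) (g s)) := by
  unfold dot3
  exact ContDiff.sum fun i _ => ((contDiff_pi.mp hf i).mul (contDiff_pi.mp hg i))

/-- for a unit-speed curve `γ` in `ℝ³` with curvature `κ > 0`, Frenet frame
`(T, N, B)` and torsion `τ` (with `B' = −τ N`), the connection 1-form in mean curvature
gauge `α_H` — defined via `e₂ = −H/|H| = −N` and the unit binormal `e₃ = T × e₂` of the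
gauge frame, by `α_H(T) = ⟨∇_T e₂, e₃⟩` — equals the torsion 1-form `τ ds`; consequently
the time-flat condition `div(α_H) = 0` along `γ` is equivalent to `τ` being constant. -/
theorem curve_alphaH_is_torsion
    (γ : ℝ → Fin 3 → ℝ) (hγ : ContDiff ℝ (⊤ : ℕ∞) γ)
    (unit_speed : ∀ s, dot3 (deriv γ s) (deriv γ s) = 1)
    (κ : ℝ → ℝ)
    (hκ : ∀ s, κ s = Real.sqrt (dot3 (deriv (deriv γ) s) (deriv (deriv γ) s)))
    (hκ_pos : ∀ s, 0 < κ s)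
    -- the Frenet normal `N = γ''/κ` (so that the mean curvature vector is `H = κ N`)
    (N : ℝ → Fin 3 → ℝ) (hN : ∀ s, N s = (κ s)⁻¹ • deriv (deriv γ) s)
    -- the binormal `B = T × N`
    (B : ℝ → Fin 3 → ℝ) (hB : ∀ s, B s = crossProduct (deriv γ s) (N s))
    -- the torsion `τ`, defined by `B' = −τ N`
    (τ : ℝ → ℝ) (hτ : ∀ s, deriv B s = -τ s • N s)
    -- the mean curvature gauge frame `e₂ = −N`, `e₃ = T × e₂`, and
    -- `α_H(T) = ⟨∇_T e₂, e₃⟩`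
    (α : ℝ → ℝ)
    (hα : ∀ s, α s = dot3 (deriv (fun u => -N u) s) (crossProduct (deriv γ s) (-N s))) :
    (∀ s, α s = τ s) ∧
    ((∀ s, deriv α s = 0) ↔ ∃ c : ℝ, ∀ s, τ s = c) := by
  
  have hγ1 : ContDiff ℝ (↑(⊤:ℕ∞)) γ := hγ.of_le (by simp)
  have hT : ContDiff ℝ (↑(⊤:ℕ∞)) (deriv γ) := (contDiff_infty_iff_deriv.mp hγ1).2
  have hγ'' : ContDiff ℝ (↑(⊤:ℕ∞)) (deriv (deriv γ)) := (contDiff_infty_iff_deriv.mp hT).2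
  have hκ_ne : ∀ s, κ s ≠ 0 := fun s => (hκ_pos s).ne'
  have hgC : ContDiff ℝ (↑(⊤:ℕ∞)) (fun s => dot3 (deriv (deriv γ) s) (deriv (deriv γ) s)) :=
    dot3_contDiff hγ'' hγ''
  have hgκ : ∀ s, dot3 (deriv (deriv γ) s) (deriv (deriv γ) s) = κ s ^ 2 := by
    intro s
    have h0 : 0 ≤ dot3 (deriv (deriv γ) s) (deriv (deriv γ) s) :=
      Finset.sum_nonneg fun i _ => mul_self_nonneg _
    rw [hκ s, Real.sq_sqrt h0]
  have hκC : ContDiff ℝ (↑(⊤:ℕ∞)) κ := by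
    have he : κ = fun s => Real.sqrt (dot3 (deriv (deriv γ) s) (deriv (deriv γ) s)) := funext hκ
    rw [he]
    exact contDiff_iff_contDiffAt.mpr fun s =>
      (hgC.contDiffAt).sqrt (by rw [hgκ s]; exact pow_ne_zero _ (hκ_ne s))
  have hNC : ContDiff ℝ (↑(⊤:ℕ∞)) N := by
    have he : N = fun s => (κ s)⁻¹ • deriv (deriv γ) s := funext hN
    rw [he]
    exact (hκC.inv hκ_ne).smul hγ''
  have hBC : ContDiff ℝ (↑(⊤:ℕ∞)) B := by
    have he : B = fun s => crossProduct (deriv γ s) (N s) := funext hB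
    rw [he]
    have hT' := contDiff_pi.mp hT
    have hN' := contDiff_pi.mp hNC
    apply contDiff_pi.mpr
    intro i
    fin_cases i <;> simp only [cross_apply, Matrix.cons_val_zero, Matrix.cons_val_one,
      Matrix.head_cons, Matrix.cons_val_two, Matrix.tail_cons] <;>
      exact ((hT' _).mul (hN' _)).sub ((hT' _).mul (hN' _))
  have hNN : ∀ s, dot3 (N s) (N s) = 1 := by
    intro s
    have h2 := hgκ s
    simp only [dot3, Fin.sum_univ_three] at h2 ⊢
    rw [hN s]
    simp only [Pi.smul_apply, smul_eq_mul]
    have hinv : (κ s)⁻¹ * κ s = 1 := inv_mul_cancel₀ (hκ_ne s)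
    linear_combination (κ s)⁻¹^2 * h2 + (1 + (κ s)⁻¹ * κ s) * hinv
  have hNB : ∀ s, dot3 (N s) (B s) = 0 := by
    intro s
    rw [hB s]
    simp only [dot3, cross_apply, Fin.sum_univ_three, Matrix.cons_val_zero, Matrix.cons_val_one,
      Matrix.head_cons, Matrix.cons_val_two, Matrix.tail_cons]
    ring
  have key : ∀ s, dot3 (deriv N s) (B s) = τ s := by
    intro s
    have hNd : HasDerivAt N (deriv N s) s :=
      ((hNC.differentiable (by simp)) s).hasDerivAt
    have hBd : HasDerivAt B (deriv B s) s :=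
      ((hBC.differentiable (by simp)) s).hasDerivAt
    have hNdi := hasDerivAt_pi.mp hNd
    have hBdi := hasDerivAt_pi.mp hBd
    have hdot : HasDerivAt (fun u => dot3 (N u) (B u))
        (dot3 (deriv N s) (B s) + dot3 (N s) (deriv B s)) s := by
      have h := HasDerivAt.fun_sum (u := Finset.univ)
        (A := fun i u => N u i * B u i)
        (A' := fun i => deriv N s i * B s i + N s i * deriv B s i)
        (fun i _ => (hNdi i).mul (hBdi i))
      simpa [dot3, Finset.sum_add_distrib] using h
    have h0 : HasDerivAt (fun u => dot3 (N u) (B u)) 0 s := by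
      have he : (fun u => dot3 (N u) (B u)) = fun _ => (0:ℝ) := funext hNB
      rw [he]; exact hasDerivAt_const s 0
    have hsum := hdot.unique h0
    have hBN' : dot3 (N s) (deriv B s) = -τ s := by
      have h1 := hNN s
      rw [hτ s]
      simp only [dot3, Fin.sum_univ_three, Pi.smul_apply, smul_eq_mul] at h1 ⊢
      linear_combination (-τ s) * h1
    linarith
  have hατ : ∀ s, α s = τ s := by
    intro s
    rw [hα s]
    have h1 : deriv (fun u => -N u) s = -deriv N s := deriv.neg
    have h2 : (crossProduct (deriv γ s)) (-N s) = -(crossProduct (deriv γ s) (N s)) :=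
      map_neg _ _
    rw [h1, h2, ← hB s]
    have h3 : dot3 (-deriv N s) (-(B s)) = dot3 (deriv N s) (B s) := by
      simp [dot3, neg_mul_neg]
    rw [h3, key s]
  refine ⟨hατ, ?_, ?_⟩
  · intro h
    have hτC : ContDiff ℝ (↑(⊤:ℕ∞)) τ := by
      have hN'C : ContDiff ℝ (↑(⊤:ℕ∞)) (deriv N) := (contDiff_infty_iff_deriv.mp hNC).2
      have he : τ = fun s => dot3 (deriv N s) (B s) := funext fun s => (key s).symm
      rw [he]; exact dot3_contDiff hN'C hBC
    have hαe : α = τ := funext hατ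
    refine ⟨τ 0, fun s => ?_⟩
    exact is_const_of_deriv_eq_zero (hτC.differentiable (by simp))
      (fun x => by rw [← hαe]; exact h x) s 0
  · rintro ⟨c, hc⟩ s
    have he : α = fun _ => c := funext fun u => (hατ u).trans (hc u)
    rw [he]; simp
end
end
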